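/- Define a strict order on elements of the n-th iterated power set of {{0},{1}} by: {0} < {1} at level 0, and at level r+1, A < B iff there exists an element c of level r with c ∈ B \ A such that for all level-r elements c* with c < c*, c* ∈ A ↔ c* ∈ B. Then < is a strict total order at every level, and is isomorphic to the order on natural numbers 0,…,twr(n)−1 under binary representation, where twr(0)=2 and twr(r+1)=2^twr(r). In particular, level n has exactly twr(n) elements. -/

import Mathlib

/-!
The recursive order at level `r + 1` is the colexicographic order on subsets of level `r`,
read through the order already built there. By induction, level `r` is order-isomorphic to
`Fin (twr r)`; the colex order on subsets of a finite linear order with `m` elements is a linear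
order on a set of `2 ^ m` elements, hence order-isomorphic to `Fin (2 ^ m)` (necessarily by the
binary value `∑ i ∈ s, 2 ^ i`).
-/

/-- `twr 0 = 2`, `twr (r+1) = 2 ^ twr r`. -/
def twr : ℕ → ℕ
  | 0 => 2
  | r + 1 => 2 ^ twr r

/-- The `r`-th iterated power set of the two-element set `{{0},{1}}`:
`It 0` is the two-element type (`false` for `{0}`, `true` for `{1}`) and
`It (r+1) = powerset (It r)`. -/
def It : ℕ → Type
  | 0 => Bool
  | r + 1 => Set (It r)

/-- Membership between consecutive levels (`It (r+1)` is `Set (It r)`). -/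
def itMem {r : ℕ} (c : It r) (A : It (r + 1)) : Prop := A c

instance {r : ℕ} : Membership (It r) (It (r + 1)) := ⟨fun A c => itMem c A⟩

/-- The recursively defined strict order: `{0} < {1}` at level `0`, and at level
`r+1`, `A < B` iff some level-`r` element `c ∈ B \ A` is such that all `c* > c`
agree between `A` and `B`. -/
def ltIt : (r : ℕ) → It r → It r → Prop
  | 0, a, b => a = false ∧ b = true
  | r + 1, A, B => ∃ c : It r, c ∈ B ∧ c ∉ A ∧
      ∀ c' : It r, ltIt r c c' → (c' ∈ A ↔ c' ∈ B)

namespace Finset.Colex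

variable {α : Type*} [LinearOrder α]

theorem toColex_lt_toColex_iff_exists_forall_lt_mem_iff {s t : Finset α} :
    toColex s < toColex t ↔ ∃ a ∈ t, a ∉ s ∧ ∀ b, a < b → (b ∈ s ↔ b ∈ t) := by
  constructor
  · intro h
    obtain ⟨hst, hmax⟩ := toColex_lt_toColex_iff_max'_mem.1 h
    set a := (symmDiff s t).max' (symmDiff_nonempty.2 hst)
    have ha : a ∈ symmDiff s t := max'_mem _ _
    refine ⟨a, hmax, fun has => ?_, fun b hab => ?_⟩
    · simp [mem_symmDiff, has, hmax] at ha
    · by_contra hb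
      have : b ∈ symmDiff s t := by rw [mem_symmDiff]; tauto
      exact (le_max' _ b this).not_gt hab
  · rintro ⟨a, hat, has, hagree⟩
    refine toColex_lt_toColex_iff_exists_forall_lt.2 ⟨a, hat, has, fun b hbs hbt => ?_⟩
    by_contra! hab
    rcases hab.lt_or_eq with hab | rfl
    · exact hbt ((hagree b hab).1 hbs)
    · exact has hbs

variable [Fintype α]

instance : Fintype (Colex (Finset α)) := inferInstanceAs (Fintype (Finset α))

noncomputable def orderIsoFin : Colex (Finset α) ≃o Fin (2 ^ Fintype.card α) :=
  (Fintype.orderIsoFinOfCardEq (Colex (Finset α)) (by exact Fintype.card_finset)).symm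

end Finset.Colex

def SetColexLt {β : Type*} (lt : β → β → Prop) (A B : Set β) : Prop :=
  ∃ c ∈ B, c ∉ A ∧ ∀ c', lt c c' → (c' ∈ A ↔ c' ∈ B)

theorem ltIt_succ {r : ℕ} (A B : It (r + 1)) : ltIt (r + 1) A B ↔ SetColexLt (ltIt r) A B := Iff.rfl

section
variable {α β : Type*} [LinearOrder α]

theorem setColexLt_image_equiv {lt : β → β → Prop} (e : β ≃ α) (he : ∀ a b, lt a b ↔ e a < e b)
    (A B : Set β) : SetColexLt (· < ·) (e '' A) (e '' B) ↔ SetColexLt lt A B := by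
  simp only [SetColexLt, e.image_eq_preimage_symm, Set.mem_preimage, e.symm.exists_congr_left,
    e.symm.forall_congr_left, Equiv.symm_symm, Equiv.symm_apply_apply, he]

theorem setColexLt_coe_iff (s t : Finset α) :
    SetColexLt (· < ·) (s : Set α) t ↔ toColex s < toColex t := by
  simp [SetColexLt, Finset.Colex.toColex_lt_toColex_iff_exists_forall_lt_mem_iff]

theorem exists_equiv_fin_setColexLt [Fintype α] {lt : β → β → Prop} (e : β ≃ α)
    (he : ∀ a b, lt a b ↔ e a < e b) :
    ∃ f : Set β ≃ Fin (2 ^ Fintype.card α), ∀ A B, SetColexLt lt A B ↔ f A < f B := by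
  refine ⟨(Equiv.Set.congr e).trans <| Fintype.finsetEquivSet.symm.trans <|
    toColex.trans Finset.Colex.orderIsoFin.toEquiv, fun A B => ?_⟩
  have hS (S : Set α) : ((Fintype.finsetEquivSet.symm S : Finset α) : Set α) = S :=
    Fintype.finsetEquivSet.apply_symm_apply S
  rw [← setColexLt_image_equiv e he, ← hS (e '' A), ← hS (e '' B), setColexLt_coe_iff]
  exact (Finset.Colex.orderIsoFin (α := α)).lt_iff_lt.symm
end

theorem exists_equiv_fin_twr_ltIt : ∀ n, ∃ e : It n ≃ Fin (twr n), ∀ a b, ltIt n a b ↔ e a < e b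
  | 0 => ⟨finTwoEquiv.symm, by
    show ∀ a b : Bool, (a = false ∧ b = true) ↔ finTwoEquiv.symm a < finTwoEquiv.symm b
    decide⟩
  | r + 1 => by
    obtain ⟨e, he⟩ := exists_equiv_fin_twr_ltIt r
    obtain ⟨f, hf⟩ := exists_equiv_fin_setColexLt e he
    let g := Fin.castOrderIso (show 2 ^ Fintype.card (Fin (twr r)) = twr (r + 1) by simp [twr])
    exact ⟨f.trans g.toEquiv, fun A B => (ltIt_succ A B).trans <| (hf A B).trans g.lt_iff_lt.symm⟩

theorem ltIt_strict_total_order_iso (n : ℕ) :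
    (∀ a : It n, ¬ ltIt n a a) ∧
    (∀ a b c : It n, ltIt n a b → ltIt n b c → ltIt n a c) ∧
    (∀ a b : It n, a ≠ b → ltIt n a b ∨ ltIt n b a) ∧
    ∃ e : It n ≃ Fin (twr n), ∀ a b : It n, ltIt n a b ↔ e a < e b := by
  obtain ⟨e, he⟩ := exists_equiv_fin_twr_ltIt n
  simp only [he]
  exact ⟨fun _ => lt_irrefl _, fun _ _ _ => lt_trans,
    fun _ _ hab => lt_or_gt_of_ne (e.injective.ne hab), e, fun _ _ => Iff.rfl⟩
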